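/- Well-posedness of the nonlinear Kolmogorov equation with bounded data: Fix T > 0. Suppose f assigns a real number f(s,x,r,z(·)) to every s ∈ [0,T], x ∈ K, r ∈ ℝ and z ∈ L²(K,𝒦,ν(s,x,dy)); that for every bounded 𝒦-measurable z : K → ℝ the map (s,x,r) ↦ f(s,x,r,z(·)) is measurable; that there exist constants L, L' ≥ 0 with |f(s,x,r,z(·)) − f(s,x,r',z'(·))| ≤ L'|r−r'| + L(∫_K |z(y)−z'(y)|² ν(s,x,dy))^{1/2} for all s,x,r,r',z,z'; that for every bounded measurable u : [0,T]×K → ℝ the map (s,x) ↦ f(s,x,u(s,x),u(s,·)−u(s,x)) is measurable; that g : K → ℝ is 𝒦-measurable; and that sup_{s∈[0,T], x∈K} (|g(x)| + |f(s,x,0,0)|) < ∞. Then there exists a unique bounded measurable function v : [0,T]×K → ℝ such that for all (t,x) ∈ [0,T]×K: v(t,x) = g(x) + ∫_t^T ∫_K (v(s,y) − v(s,x)) ν(s,x,dy) ds + ∫_t^T f(s,x,v(s,x),v(s,·) − v(s,x)) ds. -/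

import Mathlib

open MeasureTheory Set
open scoped ENNReal Classical

noncomputable section

namespace PureJumpBSDE

/-- A rate measure on the state space `K`: a transition measure `ν(t,x,·)`,
measurable in `(t,x)`, uniformly bounded, and with `ν(t,x,{x}) = 0`. -/
structure RateMeasure (K : Type*) [MeasurableSpace K] where
  ν : ℝ → K → Measure K
  measurable_coe : ∀ A : Set K, MeasurableSet A → Measurable fun p : ℝ × K => ν p.1 p.2 A
  bound : ℝ≥0∞
  bound_lt_top : bound < ⊤
  le_bound : ∀ t x, ν t x Set.univ ≤ bound
  no_self_jump : ∀ t x, ν t x {x} = 0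

variable {K : Type*} [MeasurableSpace K] {Ω : Type*} [MeasurableSpace Ω]

/-- The jump rate function `λ(t,x) = ν(t,x,K)` (as a real number). -/
def RateMeasure.lamR (μ : RateMeasure K) (t : ℝ) (x : K) : ℝ := (μ.ν t x Set.univ).toReal

/-- The jump measure `π(t,x,·) = ν(t,x,·)/λ(t,x)`, equal to `δ_x` when `λ(t,x) = 0`. -/
def RateMeasure.pi (μ : RateMeasure K) (t : ℝ) (x : K) : Measure K :=
  if μ.ν t x Set.univ = 0 then Measure.dirac x else (μ.ν t x Set.univ)⁻¹ • μ.ν t x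

/-- The σ-algebra `σ(X_r : r ∈ [t,s])`. -/
def filt (X : Ω → ℝ → K) (t s : ℝ) : MeasurableSpace Ω :=
  ⨆ r ∈ Set.Icc t s, MeasurableSpace.comap (fun ω => X ω r) inferInstance

/-- The jump times `T_n^t` of the trajectory, with values in `[0,∞]`
(`T_0^t = t`, `T_{n+1}^t = inf {s > T_n^t : X_s ≠ X_{T_n^t}}`, `inf ∅ = ∞`). -/
def jumpTime (X : Ω → ℝ → K) (t : ℝ) : ℕ → Ω → ℝ≥0∞
  | 0 => fun _ => ENNReal.ofReal t
  | n + 1 => fun ω =>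
      sInf {u : ℝ≥0∞ | ∃ s : ℝ, u = ENNReal.ofReal s ∧
        jumpTime X t n ω < ENNReal.ofReal s ∧
        X ω s ≠ X ω ((jumpTime X t n ω).toReal)}

/-- The left limit `X_{s-}(ω)` of a piecewise constant trajectory. -/
def leftLimit (X : Ω → ℝ → K) (ω : Ω) (s : ℝ) : K :=
  if h : ∃ y : K, ∃ ε > 0, ∀ r ∈ Set.Ico (s - ε) s, X ω r = y then h.choose else X ω s

/-- The predictable σ-algebra `𝒫^t` on `Ω × ℝ`, generated by the sets
`F × (a,b]` with `t ≤ a < b` and `F ∈ σ(X_r : r ∈ [t,a])`. -/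
def predSigma (X : Ω → ℝ → K) (t : ℝ) : MeasurableSpace (Ω × ℝ) :=
  MeasurableSpace.generateFrom
    {C | ∃ (F : Set Ω) (a b : ℝ), t ≤ a ∧ a < b ∧
      MeasurableSet[filt X t a] F ∧ C = F ×ˢ Set.Ioc a b}

/-- `𝒫^t ⊗ 𝒦`-measurability of a random field `H : Ω × ℝ × K → ℝ`. -/
def PredMeas2 (X : Ω → ℝ → K) (t : ℝ) (H : Ω → ℝ → K → ℝ) : Prop :=
  @Measurable ((Ω × ℝ) × K) ℝ ((predSigma X t).prod inferInstance) _
    fun p => H p.1.1 p.1.2 p.2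

/-- Progressive measurability of a real process on `[t,T]` with respect to the
filtration generated by `X` after `t`. -/
def ProgMeas (X : Ω → ℝ → K) (t T : ℝ) (Y : Ω → ℝ → ℝ) : Prop :=
  ∀ s, t ≤ s → s ≤ T →
    @Measurable (Ω × Set.Icc t s) ℝ ((filt X t s).prod inferInstance) _
      fun p => Y p.1 (p.2 : ℝ)

/-- The compensated stochastic integral
`∫_a^b ∫_K H_r(y) q^t(dr dy) = Σ_{n ≥ 1, a < T_n^t ≤ b} H_{T_n^t}(X_{T_n^t})
  − ∫_a^b ∫_K H_r(y) ν(r,X_r,dy) dr`. -/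
def qInt (μ : RateMeasure K) (X : Ω → ℝ → K) (t : ℝ) (H : Ω → ℝ → K → ℝ)
    (a b : ℝ) (ω : Ω) : ℝ :=
  (∑' n : ℕ, if 1 ≤ n ∧ ENNReal.ofReal a < jumpTime X t n ω ∧
        jumpTime X t n ω ≤ ENNReal.ofReal b
      then H ω (jumpTime X t n ω).toReal (X ω (jumpTime X t n ω).toReal) else 0)
    - ∫ r in Set.Ioc a b, (∫ y, H ω r y ∂(μ.ν r (X ω r)))

/-- Membership in `𝓛¹(p^t)`. -/
def MemL1 (μ : RateMeasure K) (X : Ω → ℝ → K) (P : Measure Ω) (t T : ℝ)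
    (H : Ω → ℝ → K → ℝ) : Prop :=
  PredMeas2 X t H ∧
    (∫⁻ ω, (∫⁻ r in Set.Ioc t T, ∫⁻ y, ENNReal.ofReal |H ω r y| ∂(μ.ν r (X ω r))) ∂P) < ⊤

/-- Membership in `𝓛²(p^t)`. -/
def MemL2 (μ : RateMeasure K) (X : Ω → ℝ → K) (P : Measure Ω) (t T : ℝ)
    (H : Ω → ℝ → K → ℝ) : Prop :=
  PredMeas2 X t H ∧
    (∫⁻ ω, (∫⁻ r in Set.Ioc t T, ∫⁻ y, ENNReal.ofReal ((H ω r y) ^ 2) ∂(μ.ν r (X ω r))) ∂P) < ⊤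

/-- Membership of the pair `(Y,Z)` in the space `𝕄^{t,x}`. -/
structure MemM (μ : RateMeasure K) (X : Ω → ℝ → K) (P : Measure Ω) (t T : ℝ)
    (Y : Ω → ℝ → ℝ) (Z : Ω → ℝ → K → ℝ) : Prop where
  progY : ProgMeas X t T Y
  predZ : PredMeas2 X t Z
  normY : (∫⁻ ω, (∫⁻ s in Set.Ioc t T, ENNReal.ofReal ((Y ω s) ^ 2)) ∂P) < ⊤
  normZ : (∫⁻ ω, (∫⁻ s in Set.Ioc t T,
      ∫⁻ y, ENNReal.ofReal ((Z ω s y) ^ 2) ∂(μ.ν s (X ω s))) ∂P) < ⊤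

/-- Identification of two pairs in `𝕄^{t,x}`: the `𝕄^{t,x}`-norm of the difference is zero. -/
def sameMM (μ : RateMeasure K) (X : Ω → ℝ → K) (P : Measure Ω) (t T : ℝ)
    (Y Y' : Ω → ℝ → ℝ) (Z Z' : Ω → ℝ → K → ℝ) : Prop :=
  (∫⁻ ω, (∫⁻ s in Set.Ioc t T, ENNReal.ofReal ((Y ω s - Y' ω s) ^ 2)) ∂P) = 0 ∧
  (∫⁻ ω, (∫⁻ s in Set.Ioc t T,
      ∫⁻ y, ENNReal.ofReal ((Z ω s y - Z' ω s y) ^ 2) ∂(μ.ν s (X ω s))) ∂P) = 0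

/-- Membership of `z : K → ℝ` in `L²(K,𝒦,ν(s,x,dy))`. -/
def InL2 (μ : RateMeasure K) (s : ℝ) (x : K) (z : K → ℝ) : Prop :=
  Measurable z ∧ (∫⁻ y, ENNReal.ofReal ((z y) ^ 2) ∂(μ.ν s x)) < ⊤

/-- Hypothesis (H) on the data `(f,g)` of the nonlinear BSDE, under the measure `P = P^{t,x}`.
By convention, `f s x r z = f s x r 0` whenever `z ∉ L²(ν(s,x,dy))`. -/
structure HypH (μ : RateMeasure K) (X : Ω → ℝ → K) (P : Measure Ω) (t T : ℝ)
    (f : ℝ → K → ℝ → (K → ℝ) → ℝ) (g : K → ℝ) (L L' : ℝ) : Prop where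
  hL : 0 ≤ L
  hL' : 0 ≤ L'
  g_meas : Measurable g
  g_sq : (∫⁻ ω, ENNReal.ofReal ((g (X ω T)) ^ 2) ∂P) < ⊤
  f_meas : ∀ z : K → ℝ, Measurable z → (∃ C, ∀ y, |z y| ≤ C) →
    Measurable fun p : (ℝ × K) × ℝ => f p.1.1 p.1.2 p.2 z
  f_lip : ∀ (s : ℝ) (x' : K) (r r' : ℝ) (z z' : K → ℝ), InL2 μ s x' z → InL2 μ s x' z' →
    |f s x' r z - f s x' r' z'| ≤ L' * |r - r'| +
      L * Real.sqrt (∫⁻ y, ENNReal.ofReal ((z y - z' y) ^ 2) ∂(μ.ν s x')).toReal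
  f_conv : ∀ (s : ℝ) (x' : K) (r : ℝ) (z : K → ℝ), ¬ InL2 μ s x' z →
    f s x' r z = f s x' r fun _ => 0
  f_int : (∫⁻ ω, (∫⁻ s in Set.Ioc t T,
      ENNReal.ofReal ((f s (X ω s) 0 fun _ => 0) ^ 2)) ∂P) < ⊤

/-- The pair `(Y,Z)` solves the linear BSDE with generator `f̄` and final datum `ξ`. -/
def SolvesLin (μ : RateMeasure K) (X : Ω → ℝ → K) (P : Measure Ω) (t T : ℝ)
    (fbar : Ω → ℝ → ℝ) (ξ : Ω → ℝ) (Y : Ω → ℝ → ℝ) (Z : Ω → ℝ → K → ℝ) : Prop :=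
  ∀ᵐ ω ∂P, ∀ s ∈ Set.Icc t T,
    Y ω s + qInt μ X t Z s T ω = ξ ω + ∫ r in Set.Ioc s T, fbar ω r

/-- The pair `(Y,Z)` solves the nonlinear BSDE with generator `f` and final datum `g(X_T)`. -/
def SolvesBSDE (μ : RateMeasure K) (X : Ω → ℝ → K) (P : Measure Ω) (t T : ℝ)
    (f : ℝ → K → ℝ → (K → ℝ) → ℝ) (g : K → ℝ)
    (Y : Ω → ℝ → ℝ) (Z : Ω → ℝ → K → ℝ) : Prop :=
  ∀ᵐ ω ∂P, ∀ s ∈ Set.Icc t T,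
    Y ω s + qInt μ X t Z s T ω =
      g (X ω T) + ∫ r in Set.Ioc s T, f r (X ω r) (Y ω r) (Z ω r)

/-- A pure jump Markov process associated with the rate measure `μ`. -/
structure JumpProcess (μ : RateMeasure K) (Ω : Type*) [MeasurableSpace Ω] where
  X : Ω → ℝ → K
  P : ℝ → K → Measure Ω
  prob : ∀ t x, IsProbabilityMeasure (P t x)
  meas_X : ∀ s, Measurable fun ω => X ω s
  starts : ∀ t x, 0 ≤ t → P t x {ω | X ω t = x} = 1
  meas_in_x : ∀ t s : ℝ, 0 ≤ t → t ≤ s → ∀ A : Set K, MeasurableSet A →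
    Measurable fun x => P t x {ω | X ω s ∈ A}
  markov : ∀ u t s : ℝ, 0 ≤ u → u ≤ t → t ≤ s → ∀ x : K, ∀ A : Set K, MeasurableSet A →
    ∀ F : Set Ω, MeasurableSet[filt X u t] F →
      P u x (F ∩ {ω | X ω s ∈ A}) = ∫⁻ ω in F, P t (X ω t) {ω' | X ω' s ∈ A} ∂(P u x)
  right_const : ∀ ω t, ∃ δ > 0, ∀ s ∈ Set.Icc t (t + δ), X ω s = X ω t
  finite_jumps : ∀ ω (a b : ℝ),
    {s ∈ Set.Ioc a b | ¬ ∃ ε > 0, ∀ r ∈ Set.Ioo (s - ε) s, X ω r = X ω s}.Finite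
  jump_kernel : ∀ t x (a b : ℝ), 0 ≤ t → t ≤ a → a < b → ∀ A : Set K, MeasurableSet A →
    P t x {ω | ENNReal.ofReal a < jumpTime X t 1 ω ∧ jumpTime X t 1 ω < ENNReal.ofReal b ∧
        X ω (jumpTime X t 1 ω).toReal ∈ A} =
      ∫⁻ s in Set.Ioo a b,
        μ.pi s x A * ENNReal.ofReal (μ.lamR s x * Real.exp (-∫ r in Set.Ioc t s, μ.lamR r x))

/-- The hamiltonian function of the optimal control problem. -/
def ham {U : Type*} (μ : RateMeasure K) (rr : ℝ → K → K → U → ℝ) (l : ℝ → K → U → ℝ)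
    (s : ℝ) (x : K) (z : K → ℝ) : ℝ :=
  ⨅ u : U, (l s x u + ∫ y, z y * (rr s x y u - 1) ∂(μ.ν s x))

/-- The set `Γ(s,x,z(·))` of minimizers defining the hamiltonian. -/
def argminSet {U : Type*} (μ : RateMeasure K) (rr : ℝ → K → K → U → ℝ)
    (l : ℝ → K → U → ℝ) (s : ℝ) (x : K) (z : K → ℝ) : Set U :=
  {u0 | l s x u0 + ∫ y, z y * (rr s x y u0 - 1) ∂(μ.ν s x) = ham μ rr l s x z}

end PureJumpBSDE

/-!
The equation says that `v` is a fixed point of the Picard map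
`Φ u (t, x) = g x + ∫_t^T (𝓛_s u(s,·)(x) + f(s, x, u(s,x), u(s,·) - u(s,x))) ds`
on bounded measurable functions. Since `ν` has uniformly bounded mass and `f` is Lipschitz,
the integrand is Lipschitz in `u` for the supremum over `x`, with constant
`M = 2Λ + L' + 2L√Λ` (`Λ` the mass bound). Hence `Φ` is of Volterra type: a bound
`c (M (T - s))ⁿ / n!` on `|u - u'|` at all times `s` yields the bound
`c (M (T - t))ⁿ⁺¹ / (n + 1)!` on `|Φ u - Φ u'|` at time `t`. Iterating, the Picard iterates
converge uniformly to a fixed point, and two fixed points differ by at most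
`c (M T)ⁿ / n!` for every `n`.
-/

namespace PureJumpBSDE

open Filter Topology ProbabilityTheory
open scoped Nat

section BoundedMeasurable

variable {α : Type*} [MeasurableSpace α]

def IsBoundedMeasurable (u : ℝ → α → ℝ) : Prop :=
  (Measurable fun p : ℝ × α => u p.1 p.2) ∧ ∃ C, ∀ t x, |u t x| ≤ C

namespace IsBoundedMeasurable

variable {u u' : ℝ → α → ℝ}

lemma measurable_apply (hu : IsBoundedMeasurable u) (t : ℝ) : Measurable (u t) :=
  hu.1.comp measurable_prodMk_left

lemma integrable_apply (hu : IsBoundedMeasurable u) (t : ℝ) (ν : Measure α)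
    [IsFiniteMeasure ν] : Integrable (u t) ν := by
  obtain ⟨C, hC⟩ := hu.2
  exact Integrable.of_bound (hu.measurable_apply t).aestronglyMeasurable C
    (Eventually.of_forall (hC t))

lemma exists_abs_sub_le (hu : IsBoundedMeasurable u) (hu' : IsBoundedMeasurable u') :
    ∃ c, 0 ≤ c ∧ ∀ t x, |u t x - u' t x| ≤ c := by
  obtain ⟨C, hC⟩ := hu.2
  obtain ⟨C', hC'⟩ := hu'.2
  refine ⟨|C| + |C'|, by positivity, fun t x => (abs_sub _ _).trans ?_⟩
  exact add_le_add ((hC t x).trans (le_abs_self C)) ((hC' t x).trans (le_abs_self C'))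

end IsBoundedMeasurable

lemma exists_isBoundedMeasurable_limit {w : ℕ → ℝ → α → ℝ} {d : ℕ → ℝ}
    (hw : ∀ n, IsBoundedMeasurable (w n)) (hd : Summable d)
    (hstep : ∀ n t x, |w n t x - w (n + 1) t x| ≤ d n) :
    ∃ v, IsBoundedMeasurable v ∧ ∀ n t x, |w n t x - v t x| ≤ ∑' m, d (n + m) := by
  have hdist : ∀ t x n, dist (w n t x) (w (n + 1) t x) ≤ d n := fun t x n => hstep n t x
  choose v hv using fun t x =>
    cauchySeq_tendsto_of_complete (cauchySeq_of_dist_le_of_summable d (hdist t x) hd)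
  have hvw : ∀ n t x, |w n t x - v t x| ≤ ∑' m, d (n + m) := fun n t x =>
    dist_le_tsum_of_dist_le_of_tendsto d (hdist t x) hd (hv t x) n
  obtain ⟨C, hC⟩ := (hw 0).2
  refine ⟨v, ⟨?_, C + ∑' m, d (0 + m), fun t x => ?_⟩, hvw⟩
  · exact measurable_of_tendsto_metrizable (fun n => (hw n).1)
      (tendsto_pi_nhds.2 fun p => hv p.1 p.2)
  · have := abs_sub_abs_le_abs_sub (v t x) (w 0 t x)
    rw [abs_sub_comm] at this
    linarith [hC t x, hvw 0 t x]

end BoundedMeasurable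

section Volterra

variable {α : Type*} [MeasurableSpace α] {Φ : (ℝ → α → ℝ) → ℝ → α → ℝ} {I : Set ℝ}
  {ρ : ℝ → ℝ}

/-- Modelled on `Φ u t = ∫_t^T F (u s) ds` with `F` `M`-Lipschitz and `ρ t = M (T - t)`:
integrating `c ρ s ^ n / n!` over `[t, T]` gives `c ρ t ^ (n + 1) / (n + 1)!`. Only the values
of `u` at times in `I` may enter. -/
def IsVolterraContraction (Φ : (ℝ → α → ℝ) → ℝ → α → ℝ) (I : Set ℝ) (ρ : ℝ → ℝ) : Prop :=
  ∀ u u', IsBoundedMeasurable u → IsBoundedMeasurable u' → ∀ (n : ℕ) (c : ℝ),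
    (∀ s ∈ I, ∀ x, |u s x - u' s x| ≤ c * ρ s ^ n / n !) →
    ∀ t x, |Φ u t x - Φ u' t x| ≤ c * ρ t ^ (n + 1) / (n + 1)!

namespace IsVolterraContraction

lemma abs_iterate_sub_le (hΦ : IsVolterraContraction Φ I ρ)
    (hS : MapsTo Φ {u | IsBoundedMeasurable u} {u | IsBoundedMeasurable u})
    {u u' : ℝ → α → ℝ} (hu : IsBoundedMeasurable u) (hu' : IsBoundedMeasurable u') {c : ℝ}
    (hc : ∀ t x, |u t x - u' t x| ≤ c) (n : ℕ) (t : ℝ) (x : α) :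
    |Φ^[n] u t x - Φ^[n] u' t x| ≤ c * ρ t ^ n / n ! := by
  induction n generalizing t x with
  | zero => simpa using hc t x
  | succ n ih =>
    rw [Function.iterate_succ_apply', Function.iterate_succ_apply']
    exact hΦ _ _ (hS.iterate n hu) (hS.iterate n hu') n c (fun s _ x => ih s x) t x

lemma eqOn_of_eqOn (hΦ : IsVolterraContraction Φ I ρ) {u u' : ℝ → α → ℝ}
    (hu : IsBoundedMeasurable u) (hu' : IsBoundedMeasurable u')
    (hfix : EqOn (Φ u) u I) (hfix' : EqOn (Φ u') u' I) : EqOn u u' I := by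
  obtain ⟨c, -, hc⟩ := hu.exists_abs_sub_le hu'
  have hbound : ∀ n, ∀ t ∈ I, ∀ x, |u t x - u' t x| ≤ c * ρ t ^ n / n ! := by
    intro n
    induction n with
    | zero => intro t _ x; simpa using hc t x
    | succ n ih =>
      intro t ht x
      rw [← hfix ht, ← hfix' ht]
      exact hΦ u u' hu hu' n c ih t x
  intro t ht
  funext x
  have hlim : Tendsto (fun n => c * ρ t ^ n / n !) atTop (𝓝 0) := by
    simpa [mul_div_assoc] using (FloorSemiring.tendsto_pow_div_factorial_atTop (ρ t)).const_mul c
  have hle : |u t x - u' t x| ≤ 0 :=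
    ge_of_tendsto hlim (Eventually.of_forall fun n => hbound n t ht x)
  exact sub_eq_zero.1 (abs_nonpos_iff.1 hle)

lemma exists_fixedPoint (hΦ : IsVolterraContraction Φ I ρ)
    (hS : MapsTo Φ {u | IsBoundedMeasurable u} {u | IsBoundedMeasurable u})
    {R : ℝ} (hρ : ∀ t, ρ t ∈ Icc 0 R) {u₀ : ℝ → α → ℝ} (hu₀ : IsBoundedMeasurable u₀) :
    ∃ v, IsBoundedMeasurable v ∧ Φ v = v := by
  obtain ⟨c, hc0, hc⟩ := (hS hu₀).exists_abs_sub_le hu₀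
  set w : ℕ → ℝ → α → ℝ := fun n => Φ^[n] u₀
  have hw : ∀ n, IsBoundedMeasurable (w n) := fun n => hS.iterate n hu₀
  set d : ℕ → ℝ := fun n => c * R ^ n / (n !)
  have hstep : ∀ n t x, |w n t x - w (n + 1) t x| ≤ d n := by
    intro n t x
    have h := hΦ.abs_iterate_sub_le hS (hS hu₀) hu₀ hc n t x
    rw [← Function.iterate_succ_apply] at h
    rw [abs_sub_comm]
    exact h.trans (by simp only [d]; gcongr; exacts [(hρ t).1, (hρ t).2])
  have hd : Summable d := by
    simpa only [d, mul_div_assoc] using (Real.summable_pow_div_factorial R).mul_left c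
  obtain ⟨v, hv, hvw⟩ := exists_isBoundedMeasurable_limit hw hd hstep
  have htail : Tendsto (fun n => ∑' m, d (n + m)) atTop (𝓝 0) := by
    simpa only [add_comm] using tendsto_sum_nat_add d
  refine ⟨v, hv, funext fun t => funext fun x => ?_⟩
  have hto_v : Tendsto (fun n => w (n + 1) t x) atTop (𝓝 (v t x)) :=
    tendsto_sub_nhds_zero_iff.1 <| squeeze_zero_norm (fun n => hvw (n + 1) t x)
      (htail.comp (tendsto_add_atTop_nat 1))
  have hto_Φv : Tendsto (fun n => w (n + 1) t x) atTop (𝓝 (Φ v t x)) := by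
    refine tendsto_sub_nhds_zero_iff.1 <| squeeze_zero_norm (a := fun n => (∑' m, d (n + m)) * ρ t)
      (fun n => ?_) (by simpa using htail.mul_const (ρ t))
    have h := hΦ (w n) v (hw n) hv 0 (∑' m, d (n + m)) (fun s _ y => by simpa using hvw n s y) t x
    simpa [w, Function.iterate_succ_apply'] using h
  exact tendsto_nhds_unique hto_Φv hto_v

end IsVolterraContraction

end Volterra

lemma measurable_setIntegral_Ioc {β : Type*} [MeasurableSpace β] {F : ℝ → β → ℝ}
    (hF : Measurable fun p : ℝ × β => F p.1 p.2) {a b : β → ℝ} (ha : Measurable a)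
    (hb : Measurable b) :
    Measurable fun y => ∫ s in Ioc (a y) (b y), F s y := by
  have hind : Measurable fun q : β × ℝ => (Ioc (a q.1) (b q.1)).indicator (F · q.1) q.2 := by
    simp only [indicator_apply, mem_Ioc]
    exact Measurable.ite ((measurableSet_lt (ha.comp measurable_fst) measurable_snd).inter
      (measurableSet_le measurable_snd (hb.comp measurable_fst)))
      (hF.comp (measurable_snd.prodMk measurable_fst)) measurable_const
  simpa only [integral_indicator measurableSet_Ioc] using
    hind.stronglyMeasurable.integral_prod_right'.measurable

lemma setIntegral_Ioc_mul_pow_div_factorial (M c : ℝ) (n : ℕ) {a b : ℝ} (hab : a ≤ b) :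
    ∫ s in Ioc a b, M * (c * (M * (b - s)) ^ n / n !) =
      c * (M * (b - a)) ^ (n + 1) / (n + 1)! := by
  have hpow : ∫ s in Ioc a b, (b - s) ^ n = (b - a) ^ (n + 1) / (n + 1) := by
    rw [← intervalIntegral.integral_of_le hab,
      intervalIntegral.integral_comp_sub_left (fun s => s ^ n), integral_pow]
    simp
  calc ∫ s in Ioc a b, M * (c * (M * (b - s)) ^ n / n !)
      = c * M ^ (n + 1) / n ! * ∫ s in Ioc a b, (b - s) ^ n := by
        rw [← integral_const_mul]
        congr 1
        funext s
        rw [mul_pow]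
        ring
    _ = c * (M * (b - a)) ^ (n + 1) / (n + 1)! := by
        rw [hpow, Nat.factorial_succ, mul_pow]
        push_cast
        field_simp

namespace RateMeasure

variable {K : Type*} [MeasurableSpace K] (μ : RateMeasure K)

instance isFiniteMeasure_ν (s : ℝ) (x : K) : IsFiniteMeasure (μ.ν s x) :=
  ⟨(μ.le_bound s x).trans_lt μ.bound_lt_top⟩

lemma toReal_ν_univ_le (s : ℝ) (x : K) : (μ.ν s x univ).toReal ≤ μ.bound.toReal :=
  ENNReal.toReal_mono μ.bound_lt_top.ne (μ.le_bound s x)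

def kernel : Kernel (ℝ × K) K where
  toFun p := μ.ν p.1 p.2
  measurable' := Measure.measurable_of_measurable_coe _ μ.measurable_coe

instance : IsFiniteKernel μ.kernel :=
  ⟨⟨μ.bound, μ.bound_lt_top, fun p => μ.le_bound p.1 p.2⟩⟩

def generator (s : ℝ) (ψ : K → ℝ) (x : K) : ℝ :=
  ∫ y, (ψ y - ψ x) ∂(μ.ν s x)

lemma measurable_generator {u : ℝ → K → ℝ} (hu : Measurable fun p : ℝ × K => u p.1 p.2) :
    Measurable fun p : ℝ × K => μ.generator p.1 (u p.1) p.2 := by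
  have hjump : StronglyMeasurable
      (Function.uncurry fun (p : ℝ × K) (y : K) => u p.1 y - u p.1 p.2) :=
    ((hu.comp (measurable_fst.fst.prodMk measurable_snd)).sub
      (hu.comp measurable_fst)).stronglyMeasurable
  exact (hjump.integral_kernel_prod_right (κ := μ.kernel)).measurable

lemma abs_generator_le {s : ℝ} {ψ : K → ℝ} {x : K} {c : ℝ} (h : ∀ y, |ψ y - ψ x| ≤ c) :
    |μ.generator s ψ x| ≤ c * μ.bound.toReal := by
  have hc : 0 ≤ c := (abs_nonneg _).trans (h x)
  calc |μ.generator s ψ x| ≤ c * (μ.ν s x).real univ := by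
        rw [← Real.norm_eq_abs]
        exact norm_integral_le_of_norm_le_const (Eventually.of_forall h)
    _ ≤ c * μ.bound.toReal := mul_le_mul_of_nonneg_left (μ.toReal_ν_univ_le s x) hc

lemma generator_sub {s : ℝ} {ψ ψ' : K → ℝ} {x : K} (hψ : Integrable ψ (μ.ν s x))
    (hψ' : Integrable ψ' (μ.ν s x)) :
    μ.generator s ψ x - μ.generator s ψ' x = μ.generator s (ψ - ψ') x := by
  rw [generator, generator, generator, ← integral_sub (f := fun y => ψ y - ψ x)
    (g := fun y => ψ' y - ψ' x) (hψ.sub (integrable_const _)) (hψ'.sub (integrable_const _))]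
  congr 1
  funext y
  simp only [Pi.sub_apply]
  ring

lemma lintegral_sq_le {s : ℝ} {x : K} {z : K → ℝ} {c : ℝ} (h : ∀ y, |z y| ≤ c) :
    ∫⁻ y, ENNReal.ofReal (z y ^ 2) ∂(μ.ν s x) ≤ ENNReal.ofReal (c ^ 2) * μ.bound :=
  calc ∫⁻ y, ENNReal.ofReal (z y ^ 2) ∂(μ.ν s x)
      ≤ ∫⁻ _, ENNReal.ofReal (c ^ 2) ∂(μ.ν s x) := lintegral_mono fun y =>
        ENNReal.ofReal_le_ofReal (sq_le_sq' (abs_le.1 (h y)).1 (abs_le.1 (h y)).2)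
    _ = ENNReal.ofReal (c ^ 2) * μ.ν s x univ := lintegral_const _
    _ ≤ ENNReal.ofReal (c ^ 2) * μ.bound := by gcongr; exact μ.le_bound s x

lemma inL2_of_abs_le {s : ℝ} {x : K} {z : K → ℝ} (hz : Measurable z) {c : ℝ}
    (h : ∀ y, |z y| ≤ c) : InL2 μ s x z :=
  ⟨hz, (μ.lintegral_sq_le h).trans_lt (ENNReal.mul_lt_top ENNReal.ofReal_lt_top μ.bound_lt_top)⟩

lemma sqrt_lintegral_sq_le {s : ℝ} {x : K} {z : K → ℝ} {c : ℝ} (hc : 0 ≤ c)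
    (h : ∀ y, |z y| ≤ c) :
    √(∫⁻ y, ENNReal.ofReal (z y ^ 2) ∂(μ.ν s x)).toReal ≤ c * √μ.bound.toReal := by
  have hle := ENNReal.toReal_mono (ENNReal.mul_ne_top ENNReal.ofReal_ne_top μ.bound_lt_top.ne)
    (μ.lintegral_sq_le (s := s) (x := x) h)
  rw [ENNReal.toReal_mul, ENNReal.toReal_ofReal (sq_nonneg c)] at hle
  rw [← Real.sqrt_sq hc, ← Real.sqrt_mul (sq_nonneg c)]
  exact Real.sqrt_le_sqrt hle

end RateMeasure

section Drift

variable {K : Type*} [MeasurableSpace K] (μ : RateMeasure K) {f : ℝ → K → ℝ → (K → ℝ) → ℝ}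
  {L L' C₀ : ℝ}

def IsLipschitzDriver (f : ℝ → K → ℝ → (K → ℝ) → ℝ) (L L' : ℝ) : Prop :=
  ∀ (s : ℝ) (x : K) (r r' : ℝ) (z z' : K → ℝ), InL2 μ s x z → InL2 μ s x z' →
    |f s x r z - f s x r' z'| ≤ L' * |r - r'| +
      L * Real.sqrt (∫⁻ y, ENNReal.ofReal ((z y - z' y) ^ 2) ∂(μ.ν s x)).toReal

def IsMeasurableDriver (f : ℝ → K → ℝ → (K → ℝ) → ℝ) : Prop :=
  ∀ u : ℝ → K → ℝ, IsBoundedMeasurable u →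
    Measurable fun p : ℝ × K => f p.1 p.2 (u p.1 p.2) fun y => u p.1 y - u p.1 p.2

def drift (f : ℝ → K → ℝ → (K → ℝ) → ℝ) (u : ℝ → K → ℝ) (s : ℝ) (x : K) : ℝ :=
  μ.generator s (u s) x + f s x (u s x) fun y => u s y - u s x

def driftLipConst (L L' : ℝ) : ℝ :=
  2 * μ.bound.toReal + L' + 2 * L * √μ.bound.toReal

lemma driftLipConst_nonneg (hL : 0 ≤ L) (hL' : 0 ≤ L') : 0 ≤ driftLipConst μ L L' := by
  unfold driftLipConst
  positivity

lemma inL2_jump {u : ℝ → K → ℝ} (hu : IsBoundedMeasurable u) (s : ℝ) (x : K) :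
    InL2 μ s x fun y => u s y - u s x := by
  obtain ⟨C, hC⟩ := hu.2
  exact μ.inL2_of_abs_le ((hu.measurable_apply s).sub_const _) (c := 2 * C) fun y => by
    linarith [abs_sub (u s y) (u s x), hC s y, hC s x]

lemma measurable_drift {u : ℝ → K → ℝ} (hu : IsBoundedMeasurable u) (hfm : IsMeasurableDriver f) :
    Measurable fun p : ℝ × K => drift μ f u p.1 p.2 :=
  (μ.measurable_generator hu.1).add (hfm u hu)

lemma abs_drift_sub_drift_le (hf : IsLipschitzDriver μ f L L') (hL : 0 ≤ L) (hL' : 0 ≤ L')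
    {u u' : ℝ → K → ℝ} (hu : IsBoundedMeasurable u) (hu' : IsBoundedMeasurable u') {s d : ℝ}
    (hd : ∀ y, |u s y - u' s y| ≤ d) (x : K) :
    |drift μ f u s x - drift μ f u' s x| ≤ driftLipConst μ L L' * d := by
  have hd0 : 0 ≤ d := (abs_nonneg _).trans (hd x)
  have hjump : ∀ y, |(u s y - u' s y) - (u s x - u' s x)| ≤ 2 * d := fun y => by
    linarith [abs_sub (u s y - u' s y) (u s x - u' s x), hd y, hd x]
  have hgen : |μ.generator s (u s) x - μ.generator s (u' s) x| ≤ 2 * d * μ.bound.toReal := by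
    rw [μ.generator_sub (hu.integrable_apply s _) (hu'.integrable_apply s _)]
    exact μ.abs_generator_le hjump
  have hsqrt := μ.sqrt_lintegral_sq_le (s := s) (x := x) (by positivity : 0 ≤ 2 * d)
    (z := fun y => (u s y - u s x) - (u' s y - u' s x))
    fun y => by rw [sub_sub_sub_comm]; exact hjump y
  have hdriver := hf s x (u s x) (u' s x) _ _ (inL2_jump μ hu s x) (inL2_jump μ hu' s x)
  calc |drift μ f u s x - drift μ f u' s x|
      = |(μ.generator s (u s) x - μ.generator s (u' s) x) +
          (f s x (u s x) (fun y => u s y - u s x) -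
            f s x (u' s x) fun y => u' s y - u' s x)| := by
        unfold drift
        congr 1
        ring
    _ ≤ 2 * d * μ.bound.toReal + (L' * d + L * (2 * d * √μ.bound.toReal)) := by
        refine (abs_add_le _ _).trans (add_le_add hgen (hdriver.trans ?_))
        gcongr
        exact hd x
    _ = driftLipConst μ L L' * d := by
        unfold driftLipConst
        ring

lemma abs_drift_le (hf : IsLipschitzDriver μ f L L') (hL : 0 ≤ L) (hL' : 0 ≤ L')
    {u : ℝ → K → ℝ} (hu : IsBoundedMeasurable u) {s C : ℝ} (hC : ∀ y, |u s y| ≤ C) (x : K) :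
    |drift μ f u s x| ≤ driftLipConst μ L L' * C + |f s x 0 fun _ => 0| := by
  have hzero : drift μ f 0 s x = f s x 0 fun _ => 0 := by
    simp [drift, RateMeasure.generator]
  have h := abs_drift_sub_drift_le μ hf hL hL' hu (u' := 0)
    ⟨measurable_const, 0, fun _ _ => by simp⟩ (d := C) (by simpa using hC) x
  rw [hzero] at h
  linarith [abs_sub_abs_le_abs_sub (drift μ f u s x) (f s x 0 fun _ => 0)]

lemma integrableOn_generator {u : ℝ → K → ℝ} (hu : IsBoundedMeasurable u) (a b : ℝ) (x : K) :
    IntegrableOn (fun s => μ.generator s (u s) x) (Ioc a b) := by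
  obtain ⟨C, hC⟩ := hu.2
  refine Measure.integrableOn_of_bounded (M := 2 * C * μ.bound.toReal) (by simp)
    ((μ.measurable_generator hu.1).comp measurable_prodMk_right).aestronglyMeasurable
    (Eventually.of_forall fun s => μ.abs_generator_le fun y => ?_)
  linarith [abs_sub (u s y) (u s x), hC s y, hC s x]

lemma integrableOn_drift {T : ℝ} (hf : IsLipschitzDriver μ f L L') (hL : 0 ≤ L) (hL' : 0 ≤ L')
    (hfm : IsMeasurableDriver f) (hf₀ : ∀ s ∈ Icc 0 T, ∀ x, |f s x 0 fun _ => 0| ≤ C₀)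
    {u : ℝ → K → ℝ} (hu : IsBoundedMeasurable u) {a : ℝ} (ha : 0 ≤ a) (x : K) :
    IntegrableOn (fun s => drift μ f u s x) (Ioc a T) := by
  obtain ⟨C, hC⟩ := hu.2
  refine Measure.integrableOn_of_bounded (M := driftLipConst μ L L' * C + C₀) (by simp)
    ((measurable_drift μ hu hfm).comp measurable_prodMk_right).aestronglyMeasurable
    (ae_restrict_of_forall_mem measurableSet_Ioc fun s hs => ?_)
  exact (abs_drift_le μ hf hL hL' hu (hC s) x).trans
    (add_le_add_right (hf₀ s ⟨ha.trans hs.1.le, hs.2⟩ x) _)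

end Drift

section Picard

variable {K : Type*} [MeasurableSpace K] (μ : RateMeasure K) (f : ℝ → K → ℝ → (K → ℝ) → ℝ)
  (g : K → ℝ) {T L L' C₀ : ℝ} (hT : 0 ≤ T)

/-- Extended constantly outside `[0, T]`, where `f` is not controlled, so that the Picard
map is defined and estimated at all times. -/
def picard (u : ℝ → K → ℝ) : ℝ → K → ℝ :=
  IccExtend hT fun t x => g x + ∫ s in Ioc (t : ℝ) T, drift μ f u s x

lemma picard_apply (u : ℝ → K → ℝ) (t : ℝ) (x : K) :
    picard μ f g hT u t x = g x + ∫ s in Ioc (projIcc 0 T hT t : ℝ) T, drift μ f u s x :=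
  rfl

lemma picard_apply_of_mem (hf : IsLipschitzDriver μ f L L') (hL : 0 ≤ L) (hL' : 0 ≤ L')
    (hfm : IsMeasurableDriver f) (hf₀ : ∀ s ∈ Icc 0 T, ∀ x, |f s x 0 fun _ => 0| ≤ C₀)
    {u : ℝ → K → ℝ} (hu : IsBoundedMeasurable u) {t : ℝ} (ht : t ∈ Icc 0 T) (x : K) :
    picard μ f g hT u t x = g x + (∫ s in Ioc t T, μ.generator s (u s) x) +
      ∫ s in Ioc t T, f s x (u s x) fun y => u s y - u s x := by
  have hgen := integrableOn_generator μ hu t T x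
  have hdriver := ((integrableOn_drift μ hf hL hL' hfm hf₀ hu ht.1 x).sub hgen).congr_fun
    (fun s _ => add_sub_cancel_left _ _) measurableSet_Ioc
  rw [picard, IccExtend_of_mem hT _ ht, add_assoc, ← integral_add hgen hdriver]
  rfl

lemma mapsTo_picard (hf : IsLipschitzDriver μ f L L') (hL : 0 ≤ L) (hL' : 0 ≤ L')
    (hfm : IsMeasurableDriver f) (hf₀ : ∀ s ∈ Icc 0 T, ∀ x, |f s x 0 fun _ => 0| ≤ C₀)
    (hg : Measurable g) {C : ℝ} (hgC : ∀ x, |g x| ≤ C) :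
    MapsTo (picard μ f g hT) {u | IsBoundedMeasurable u} {u | IsBoundedMeasurable u} := by
  intro u hu
  obtain ⟨Cu, hCu⟩ := hu.2
  set B := driftLipConst μ L L' * Cu + C₀
  refine ⟨?_, C + |B| * T, fun t x => ?_⟩
  · have hdrift : Measurable fun q : ℝ × ℝ × K => drift μ f u q.1 q.2.2 :=
      (measurable_drift μ hu hfm).comp (measurable_fst.prodMk measurable_snd.snd)
    exact (hg.comp measurable_snd).add (measurable_setIntegral_Ioc hdrift
      ((continuous_subtype_val.comp continuous_projIcc).measurable.comp measurable_fst)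
      measurable_const)
  obtain ⟨ha₀, haT⟩ := (projIcc 0 T hT t).2
  have hint : |∫ s in Ioc (projIcc 0 T hT t : ℝ) T, drift μ f u s x| ≤ |B| * T := by
    rw [← Real.norm_eq_abs]
    refine (norm_setIntegral_le_of_norm_le_const (C := B) measure_Ioc_lt_top
      fun s hs => ?_).trans ?_
    · exact (abs_drift_le μ hf hL hL' hu (hCu s) x).trans
        (add_le_add_right (hf₀ s ⟨ha₀.trans hs.1.le, hs.2⟩ x) _)
    · rw [Real.volume_real_Ioc_of_le haT]
      exact (mul_le_mul_of_nonneg_right (le_abs_self B) (by linarith)).trans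
        (mul_le_mul_of_nonneg_left (by linarith) (abs_nonneg B))
  rw [picard_apply]
  exact (abs_add_le _ _).trans (add_le_add (hgC x) hint)

lemma isVolterraContraction_picard (hf : IsLipschitzDriver μ f L L') (hL : 0 ≤ L)
    (hL' : 0 ≤ L') (hfm : IsMeasurableDriver f)
    (hf₀ : ∀ s ∈ Icc 0 T, ∀ x, |f s x 0 fun _ => 0| ≤ C₀) :
    IsVolterraContraction (picard μ f g hT) (Icc 0 T)
      (IccExtend hT fun t => driftLipConst μ L L' * (T - t)) := by
  intro u u' hu hu' n c hc t x
  set M := driftLipConst μ L L'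
  set a : ℝ := (projIcc 0 T hT t : ℝ)
  obtain ⟨ha₀, haT⟩ := (projIcc 0 T hT t).2
  have hbound : ∀ s ∈ Ioc a T,
      ‖drift μ f u s x - drift μ f u' s x‖ ≤ M * (c * (M * (T - s)) ^ n / n !) := by
    intro s hs
    have hsI : s ∈ Icc 0 T := ⟨ha₀.trans hs.1.le, hs.2⟩
    refine abs_drift_sub_drift_le μ hf hL hL' hu hu' (fun y => ?_) x
    simpa [IccExtend_of_mem hT _ hsI] using hc s hsI y
  have hcont : Continuous fun s => M * (c * (M * (T - s)) ^ n / n !) := by fun_prop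
  calc |picard μ f g hT u t x - picard μ f g hT u' t x|
      = ‖∫ s in Ioc a T, (drift μ f u s x - drift μ f u' s x)‖ := by
        rw [picard_apply, picard_apply, add_sub_add_left_eq_sub, integral_sub
          (integrableOn_drift μ hf hL hL' hfm hf₀ hu ha₀ x)
          (integrableOn_drift μ hf hL hL' hfm hf₀ hu' ha₀ x), Real.norm_eq_abs]
    _ ≤ ∫ s in Ioc a T, M * (c * (M * (T - s)) ^ n / n !) :=
        norm_integral_le_of_norm_le hcont.integrableOn_Ioc
          (ae_restrict_of_forall_mem measurableSet_Ioc hbound)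
    _ = c * (M * (T - a)) ^ (n + 1) / (n + 1)! :=
        setIntegral_Ioc_mul_pow_div_factorial M c n haT

lemma IccExtend_mul_sub_mem_Icc {M : ℝ} (hM : 0 ≤ M) (t : ℝ) :
    IccExtend hT (fun s => M * (T - s)) t ∈ Icc 0 (M * T) := by
  obtain ⟨ha₀, haT⟩ := (projIcc 0 T hT t).2
  exact ⟨mul_nonneg hM (sub_nonneg.2 haT), mul_le_mul_of_nonneg_left (by linarith) hM⟩

end Picard

theorem kolmogorov_bounded_wellposed_general
    {K : Type*} [MeasurableSpace K]
    (μ : RateMeasure K) (T : ℝ) (hT : 0 < T)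
    (f : ℝ → K → ℝ → (K → ℝ) → ℝ) (g : K → ℝ) (L L' : ℝ) (hL : 0 ≤ L) (hL' : 0 ≤ L')
    (f_lip : ∀ (s : ℝ) (x : K) (r r' : ℝ) (z z' : K → ℝ), InL2 μ s x z → InL2 μ s x z' →
      |f s x r z - f s x r' z'| ≤ L' * |r - r'| +
        L * Real.sqrt (∫⁻ y, ENNReal.ofReal ((z y - z' y) ^ 2) ∂(μ.ν s x)).toReal)
    (f_comp_meas : ∀ u : ℝ → K → ℝ, Measurable (fun p : ℝ × K => u p.1 p.2) →
      (∃ C, ∀ s x, |u s x| ≤ C) →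
      Measurable fun p : ℝ × K => f p.1 p.2 (u p.1 p.2) fun y => u p.1 y - u p.1 p.2)
    (g_meas : Measurable g)
    (bdd : ∃ C : ℝ, ∀ s ∈ Set.Icc (0:ℝ) T, ∀ x : K, |g x| + |f s x 0 fun _ => 0| ≤ C) :
    ∃ v : ℝ → K → ℝ,
      ((Measurable fun p : ℝ × K => v p.1 p.2) ∧ (∃ C : ℝ, ∀ s x, |v s x| ≤ C) ∧
        ∀ t ∈ Set.Icc (0:ℝ) T, ∀ x : K,
          v t x = g x + (∫ s in Set.Ioc t T, (∫ y, (v s y - v s x) ∂(μ.ν s x))) +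
            ∫ s in Set.Ioc t T, f s x (v s x) fun y => v s y - v s x) ∧
      ∀ v' : ℝ → K → ℝ,
        (Measurable fun p : ℝ × K => v' p.1 p.2) → (∃ C : ℝ, ∀ s x, |v' s x| ≤ C) →
        (∀ t ∈ Set.Icc (0:ℝ) T, ∀ x : K,
          v' t x = g x + (∫ s in Set.Ioc t T, (∫ y, (v' s y - v' s x) ∂(μ.ν s x))) +
            ∫ s in Set.Ioc t T, f s x (v' s x) fun y => v' s y - v' s x) →
        ∀ t ∈ Set.Icc (0:ℝ) T, ∀ x : K, v' t x = v t x := by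
  obtain ⟨C, hC⟩ := bdd
  have hgC : ∀ x, |g x| ≤ C := fun x =>
    (le_add_of_nonneg_right (abs_nonneg _)).trans (hC 0 ⟨le_rfl, hT.le⟩ x)
  have hf₀ : ∀ s ∈ Icc 0 T, ∀ x, |f s x 0 fun _ => 0| ≤ C := fun s hs x =>
    (le_add_of_nonneg_left (abs_nonneg _)).trans (hC s hs x)
  have hfm : IsMeasurableDriver f := fun u hu => f_comp_meas u hu.1 hu.2
  have hS := mapsTo_picard μ f g hT.le f_lip hL hL' hfm hf₀ g_meas hgC
  have hV := isVolterraContraction_picard μ f g hT.le f_lip hL hL' hfm hf₀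
  obtain ⟨v, hv, hfix⟩ := hV.exists_fixedPoint hS
    (IccExtend_mul_sub_mem_Icc hT.le (driftLipConst_nonneg μ hL hL'))
    (u₀ := fun _ => g) ⟨g_meas.comp measurable_snd, C, fun _ => hgC⟩
  refine ⟨v, ⟨hv.1, hv.2, fun t ht x => ?_⟩, fun v' hv'm hv'C hv' t ht x => ?_⟩
  · exact (congrFun (congrFun hfix t) x).symm.trans
      (picard_apply_of_mem μ f g hT.le f_lip hL hL' hfm hf₀ hv ht x)
  · have hv'bm : IsBoundedMeasurable v' := ⟨hv'm, hv'C⟩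
    have hfix' : EqOn (picard μ f g hT.le v') v' (Icc 0 T) := fun t ht => funext fun x =>
      (picard_apply_of_mem μ f g hT.le f_lip hL hL' hfm hf₀ hv'bm ht x).trans (hv' t ht x).symm
    exact congrFun (hV.eqOn_of_eqOn hv'bm hv hfix' (fun t _ => congrFun hfix t) ht) x

/-- **Well-posedness of the nonlinear Kolmogorov equation with bounded data**
(Lemma 4.1): if `g` and `f(·,·,0,0)` are uniformly bounded, the nonlinear Kolmogorov
equation `v(t,x) = g(x) + ∫_t^T 𝓛_s v(s,x) ds + ∫_t^T f(s,x,v(s,x),v(s,·)-v(s,x)) ds`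
has a unique solution in the class of bounded measurable functions. -/
theorem kolmogorov_bounded_wellposed
    {K : Type*} [MeasurableSpace K] [MeasurableSingletonClass K]
    (μ : RateMeasure K) (T : ℝ) (hT : 0 < T)
    (f : ℝ → K → ℝ → (K → ℝ) → ℝ) (g : K → ℝ) (L L' : ℝ) (hL : 0 ≤ L) (hL' : 0 ≤ L')
    (f_meas : ∀ z : K → ℝ, Measurable z → (∃ C, ∀ y, |z y| ≤ C) →
      Measurable fun p : (ℝ × K) × ℝ => f p.1.1 p.1.2 p.2 z)
    (f_lip : ∀ (s : ℝ) (x : K) (r r' : ℝ) (z z' : K → ℝ), InL2 μ s x z → InL2 μ s x z' →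
      |f s x r z - f s x r' z'| ≤ L' * |r - r'| +
        L * Real.sqrt (∫⁻ y, ENNReal.ofReal ((z y - z' y) ^ 2) ∂(μ.ν s x)).toReal)
    (f_conv : ∀ (s : ℝ) (x : K) (r : ℝ) (z : K → ℝ), ¬ InL2 μ s x z →
      f s x r z = f s x r fun _ => 0)
    (f_comp_meas : ∀ u : ℝ → K → ℝ, Measurable (fun p : ℝ × K => u p.1 p.2) →
      (∃ C, ∀ s x, |u s x| ≤ C) →
      Measurable fun p : ℝ × K => f p.1 p.2 (u p.1 p.2) fun y => u p.1 y - u p.1 p.2)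
    (g_meas : Measurable g)
    (bdd : ∃ C : ℝ, ∀ s ∈ Set.Icc (0:ℝ) T, ∀ x : K, |g x| + |f s x 0 fun _ => 0| ≤ C) :
    ∃ v : ℝ → K → ℝ,
      ((Measurable fun p : ℝ × K => v p.1 p.2) ∧ (∃ C : ℝ, ∀ s x, |v s x| ≤ C) ∧
        ∀ t ∈ Set.Icc (0:ℝ) T, ∀ x : K,
          v t x = g x + (∫ s in Set.Ioc t T, (∫ y, (v s y - v s x) ∂(μ.ν s x))) +
            ∫ s in Set.Ioc t T, f s x (v s x) fun y => v s y - v s x) ∧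
      ∀ v' : ℝ → K → ℝ,
        (Measurable fun p : ℝ × K => v' p.1 p.2) → (∃ C : ℝ, ∀ s x, |v' s x| ≤ C) →
        (∀ t ∈ Set.Icc (0:ℝ) T, ∀ x : K,
          v' t x = g x + (∫ s in Set.Ioc t T, (∫ y, (v' s y - v' s x) ∂(μ.ν s x))) +
            ∫ s in Set.Ioc t T, f s x (v' s x) fun y => v' s y - v' s x) →
        ∀ t ∈ Set.Icc (0:ℝ) T, ∀ x : K, v' t x = v t x :=
  kolmogorov_bounded_wellposed_general μ T hT f g L L' hL hL' f_lip f_comp_meas g_meas bdd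

end PureJumpBSDE
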